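/- arXiv:1810.10848 — 6 statements merged into one kernel-verified Lean document; each statement's English description precedes it below -/
import Mathlib

section
/- Let $R$ be a commutative ring of prime characteristic $p$ and let $D : R \to R$ be a derivation. Then the $p$-fold composite $D^p = D \circ \cdots \circ D$ is again a derivation of $R$. -/
open Finset in
private lemma iter_leibniz {R : Type*} [CommRing R] (D : Derivation ℤ R R) (n : ℕ) (a b : R) :
    (⇑D)^[n] (a * b) =
      ∑ k ∈ range (n + 1), (n.choose k : R) * ((⇑D)^[k] a * (⇑D)^[n - k] b) := by
  induction n with
  | zero => simp
  | succ n ih =>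
    rw [Function.iterate_succ_apply', ih, map_sum]
    have hstep : ∀ k ∈ range (n + 1),
        D ((n.choose k : R) * ((⇑D)^[k] a * (⇑D)^[n - k] b)) =
          (n.choose k : R) * ((⇑D)^[k + 1] a * (⇑D)^[n - k] b)
          + (n.choose k : R) * ((⇑D)^[k] a * (⇑D)^[n + 1 - k] b) := by
      intro k hk
      rw [mem_range] at hk
      have hk' : k ≤ n := Nat.lt_succ_iff.mp hk
      have h1 : n + 1 - k = (n - k) + 1 := by omega
      rw [Derivation.leibniz, Derivation.map_natCast, Derivation.leibniz, h1,
        Function.iterate_succ_apply', Function.iterate_succ_apply']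
      simp only [smul_eq_mul]
      ring
    rw [Finset.sum_congr rfl hstep, Finset.sum_add_distrib]
    -- rewrite RHS
    rw [Finset.sum_range_succ' (fun k => ((n+1).choose k : R) * ((⇑D)^[k] a * (⇑D)^[n + 1 - k] b))]
    have hpascal : ∀ j ∈ range (n + 1),
        (((n + 1).choose (j + 1) : R)) * ((⇑D)^[j + 1] a * (⇑D)^[n + 1 - (j + 1)] b)
          = (n.choose j : R) * ((⇑D)^[j + 1] a * (⇑D)^[n - j] b)
            + (n.choose (j + 1) : R) * ((⇑D)^[j + 1] a * (⇑D)^[n - j] b) := by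
      intro j hj
      have : n + 1 - (j + 1) = n - j := by omega
      rw [this, Nat.choose_succ_succ, Nat.cast_add]
      ring
    rw [Finset.sum_congr rfl hpascal, Finset.sum_add_distrib]
    have hsecond : ∑ j ∈ range (n + 1), (n.choose (j + 1) : R) * ((⇑D)^[j + 1] a * (⇑D)^[n - j] b)
          + ((n + 1).choose 0 : R) * ((⇑D)^[0] a * (⇑D)^[n + 1 - 0] b)
        = ∑ k ∈ range (n + 1), (n.choose k : R) * ((⇑D)^[k] a * (⇑D)^[n + 1 - k] b) := by
      rw [Finset.sum_range_succ' (fun k => (n.choose k : R) * ((⇑D)^[k] a * (⇑D)^[n + 1 - k] b))]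
      congr 1
      · rw [Finset.sum_range_succ, Nat.choose_succ_self, Nat.cast_zero, zero_mul, add_zero]
        apply Finset.sum_congr rfl
        intro j hj
        rw [mem_range] at hj
        have : n + 1 - (j + 1) = n - j := by omega
        rw [this]
      · simp
    rw [← hsecond]
    ring

/-- In characteristic `p`, the `p`-fold iterate of a derivation is again a derivation. -/
theorem statement0 (R : Type*) [CommRing R] (p : ℕ) (hp : p.Prime) [CharP R p]
    (D : Derivation ℤ R R) :
    ∃ E : Derivation ℤ R R, ∀ a : R, E a = (⇑D)^[p] a := by
  have hlin : ∀ a : R, (D.toLinearMap ^ p) a = (⇑D)^[p] a := fun a => by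
    rw [Module.End.pow_apply]; rfl
  refine ⟨{ toLinearMap := D.toLinearMap ^ p,
            map_one_eq_zero' := ?_, leibniz' := ?_ }, fun a => hlin a⟩
  · show (D.toLinearMap ^ p) 1 = 0
    rw [hlin]
    obtain ⟨q, hq⟩ := Nat.exists_eq_succ_of_ne_zero hp.ne_zero
    rw [hq, Function.iterate_succ_apply, Derivation.map_one_eq_zero]
    simp [Function.iterate_fixed]
  · intro a b
    show (D.toLinearMap ^ p) (a * b) = a • (D.toLinearMap ^ p) b + b • (D.toLinearMap ^ p) a
    rw [hlin, hlin, hlin, iter_leibniz]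
    have hmid : ∀ k ∈ Finset.range (p + 1), k ≠ 0 ∧ k ≠ p →
        (p.choose k : R) * ((⇑D)^[k] a * (⇑D)^[p - k] b) = 0 := by
      intro k hk ⟨h0, hp'⟩
      rw [Finset.mem_range] at hk
      have hdvd : p ∣ p.choose k := hp.dvd_choose_self h0 (by omega)
      obtain ⟨c, hc⟩ := hdvd
      rw [hc, Nat.cast_mul, CharP.cast_eq_zero R p, zero_mul, zero_mul]
    rw [Finset.sum_eq_add_of_mem (0 : ℕ) p (Finset.mem_range.mpr (by omega))
      (Finset.mem_range.mpr (by omega)) hp.ne_zero.symm hmid]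
    simp [smul_eq_mul]
    ring
end

section
/- Let $k$ be a field of characteristic $p > 0$. The center of the Weyl algebra $A = k\langle x, d\rangle/(dx - xd - 1)$ is the polynomial subalgebra $k[x^p, d^p]$. -/
/-!
The Weyl algebra acts on `k[X, Y]` (written `X 0`, `X 1`) in two ways: from the left by
`x ↦ X`, `d ↦ Y + ∂/∂X`, and from the right by `x ↦ X + ∂/∂Y`, `d ↦ Y`. Both send the
normal-ordered monomial `x^i d^j`, applied to `1`, to `X^i Y^j`. As these monomials span, the symbol
map `a ↦ a · 1` is a linear isomorphism (the PBW basis), and under it `[d, a]` becomes `∂/∂X` and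
`[a, x]` becomes `∂/∂Y` of the symbol of `a`. So `a` is central iff both partial derivatives of its
symbol vanish, which in characteristic `p` means that every monomial of the symbol has exponents
divisible by `p`, i.e. `a ∈ k[x^p, d^p]`.
-/

/-- The defining relation of the Weyl algebra: `d * x = x * d + 1`
(generator `false` is `x`, generator `true` is `d`). -/
inductive WeylRel (k : Type) [Field k] : FreeAlgebra k Bool → FreeAlgebra k Bool → Prop
  | rel : WeylRel k (FreeAlgebra.ι k true * FreeAlgebra.ι k false)
      (FreeAlgebra.ι k false * FreeAlgebra.ι k true + 1)

/-- The generator `x` of the Weyl algebra. -/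
noncomputable def Wx (k : Type) [Field k] : RingQuot (WeylRel k) :=
  RingQuot.mkAlgHom k (WeylRel k) (FreeAlgebra.ι k false)

/-- The generator `d` of the Weyl algebra. -/
noncomputable def Wd (k : Type) [Field k] : RingQuot (WeylRel k) :=
  RingQuot.mkAlgHom k (WeylRel k) (FreeAlgebra.ι k true)

open MvPolynomial

theorem Subalgebra.centralizer_eq_center_of_adjoin_eq_top {R A : Type*} [CommSemiring R]
    [Semiring A] [Algebra R A] {s : Set A} (hs : Algebra.adjoin R s = ⊤) :
    Subalgebra.centralizer R s = Subalgebra.center R A := by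
  refine le_antisymm (fun z hz => Subalgebra.mem_center_iff.mpr fun a => ?_)
    (center_le_centralizer R s)
  have ha : a ∈ Algebra.adjoin R s := by simp [hs]
  exact (Algebra.adjoin_le_centralizer_centralizer R s ha z hz).symm

theorem Submodule.span_range_eq_top_of_mul_mem {R A ι : Type*} [CommSemiring R] [Semiring A]
    [Algebra R A] {s : Set A} (hs : Algebra.adjoin R s = ⊤) {v : ι → A}
    (h_one : (1 : A) ∈ span R (Set.range v))
    (h_mul : ∀ i, ∀ g ∈ s, v i * g ∈ span R (Set.range v)) :
    span R (Set.range v) = ⊤ := by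
  set S := span R (Set.range v)
  have h_closed : ∀ a, ∀ w ∈ S, w * a ∈ S := by
    intro a
    induction (by simp [hs] : a ∈ Algebra.adjoin R s) using Algebra.adjoin_induction with
    | mem g hg =>
      intro w hw
      induction hw using span_induction with
      | mem _ hx => obtain ⟨i, rfl⟩ := hx; exact h_mul i g hg
      | zero => simp
      | add x y _ _ hx hy => rw [add_mul]; exact S.add_mem hx hy
      | smul r x _ hx => rw [smul_mul_assoc]; exact S.smul_mem r hx
    | algebraMap r =>
      intro w hw
      rw [← Algebra.commutes, ← Algebra.smul_def]
      exact S.smul_mem r hw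
    | add a b _ _ ha hb => intro w hw; rw [mul_add]; exact S.add_mem (ha w hw) (hb w hw)
    | mul a b _ _ ha hb => intro w hw; rw [← mul_assoc]; exact hb _ (ha w hw)
  exact eq_top_iff.mpr fun a _ => one_mul a ▸ h_closed a 1 h_one

theorem pow_succ_mul_eq_of_mul_eq_mul_add_one {R : Type*} [Semiring R] {x d : R}
    (h : d * x = x * d + 1) (n : ℕ) :
    d ^ (n + 1) * x = x * d ^ (n + 1) + (n + 1) • d ^ n := by
  induction n with
  | zero => simpa using h
  | succ n ih =>
    rw [pow_succ', mul_assoc, ih, mul_add, ← mul_assoc, h, add_mul, one_mul, mul_assoc,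
      ← pow_succ', mul_smul_comm, ← pow_succ']
    module

theorem Derivation.mulLeft_add_mul_mulLeft {R S : Type*} [CommSemiring R] [CommSemiring S]
    [Algebra R S] (D : Derivation R S S) {u : S} (hu : D u = 1) (v : S) :
    (LinearMap.mulLeft R v + D.toLinearMap) * LinearMap.mulLeft R u
      = LinearMap.mulLeft R u * (LinearMap.mulLeft R v + D.toLinearMap) + 1 := by
  ext f
  simp [D.leibniz, hu]
  ring

theorem Derivation.mulLeft_add_pow_apply_one {R S : Type*} [CommSemiring R] [CommSemiring S]
    [Algebra R S] (D : Derivation R S S) {v : S} (hv : D v = 0) (n : ℕ) :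
    ((LinearMap.mulLeft R v + D.toLinearMap) ^ n) 1 = v ^ n := by
  induction n with
  | zero => simp
  | succ n ih => simp [pow_succ', Module.End.mul_apply, ih, D.leibniz_pow, hv]

theorem MvPolynomial.dvd_of_mem_support_of_pderiv_eq_zero {σ R : Type*} [CommSemiring R]
    [NoZeroDivisors R] {p : ℕ} [CharP R p] {f : MvPolynomial σ R} {i : σ} (hf : pderiv i f = 0)
    {n : σ →₀ ℕ} (hn : n ∈ f.support) : p ∣ n i := by
  rcases Nat.eq_zero_or_pos (n i) with h | h
  · exact h ▸ dvd_zero p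
  have h_le : Finsupp.single i 1 ≤ n := Finsupp.single_le_iff.mpr h
  have := coeff_pderiv (i := i) f (n - Finsupp.single i 1)
  rw [hf, coeff_zero, tsub_add_cancel_of_le h_le, Finsupp.tsub_apply, Finsupp.single_eq_same,
    ← Nat.cast_add_one, Nat.sub_add_cancel h] at this
  refine (CharP.cast_eq_zero_iff R p _).mp ?_
  exact (mul_eq_zero.mp this.symm).resolve_left (mem_support_iff.mp hn)

theorem MvPolynomial.monomial_one_eq_X_pow_mul_X_pow {R : Type*} [CommSemiring R]
    (m : Fin 2 →₀ ℕ) : (monomial m 1 : MvPolynomial (Fin 2) R) = X 0 ^ m 0 * X 1 ^ m 1 := by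
  rw [monomial_eq, C_1, one_mul, Finsupp.prod_fintype _ _ (by simp), Fin.prod_univ_two]

namespace WeylAlgebra

variable (k : Type) [Field k]

local notation "A" => RingQuot (WeylRel k)

theorem Wd_mul_Wx : Wd k * Wx k = Wx k * Wd k + 1 := by
  simpa only [map_mul, map_add, map_one, Wx, Wd] using
    RingQuot.mkAlgHom_rel k (WeylRel.rel (k := k))

theorem adjoin_Wx_Wd : Algebra.adjoin k {Wx k, Wd k} = ⊤ := by
  have h := congrArg (Subalgebra.map (RingQuot.mkAlgHom k (WeylRel k)))
    (FreeAlgebra.adjoin_range_ι k Bool)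
  rwa [AlgHom.map_adjoin, Algebra.map_top, (AlgHom.range_eq_top _).mpr
    (RingQuot.mkAlgHom_surjective k (WeylRel k)), ← Set.range_comp, Bool.range_eq] at h

noncomputable def leftAction : A →ₐ[k] Module.End k (MvPolynomial (Fin 2) k) :=
  RingQuot.liftAlgHom k ⟨FreeAlgebra.lift k fun b =>
      if b then LinearMap.mulLeft k (X 1) + (pderiv 0).toLinearMap else LinearMap.mulLeft k (X 0),
    by rintro _ _ ⟨⟩; simpa using (pderiv 0).mulLeft_add_mul_mulLeft (pderiv_X_self 0) (X 1)⟩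

noncomputable def rightAction : A →ₐ[k] (Module.End k (MvPolynomial (Fin 2) k))ᵐᵒᵖ :=
  RingQuot.liftAlgHom k ⟨FreeAlgebra.lift k fun b => MulOpposite.op <|
      if b then LinearMap.mulLeft k (X 1) else LinearMap.mulLeft k (X 0) + (pderiv 1).toLinearMap,
    by
      rintro _ _ ⟨⟩
      simpa [← MulOpposite.op_mul, ← MulOpposite.op_add, ← MulOpposite.op_one] using
        congrArg MulOpposite.op ((pderiv 1).mulLeft_add_mul_mulLeft (pderiv_X_self 1) (X 0))⟩

@[simp]
theorem leftAction_Wx : leftAction k (Wx k) = LinearMap.mulLeft k (X 0) := by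
  simp [leftAction, Wx]

@[simp]
theorem leftAction_Wd :
    leftAction k (Wd k) = LinearMap.mulLeft k (X 1) + (pderiv 0).toLinearMap := by
  simp [leftAction, Wd]

@[simp]
theorem rightAction_Wx :
    (rightAction k (Wx k)).unop = LinearMap.mulLeft k (X 0) + (pderiv 1).toLinearMap := by
  simp [rightAction, Wx]

@[simp]
theorem rightAction_Wd : (rightAction k (Wd k)).unop = LinearMap.mulLeft k (X 1) := by
  simp [rightAction, Wd]

noncomputable def symbol : A →ₗ[k] MvPolynomial (Fin 2) k :=
  (LinearMap.applyₗ 1).comp (leftAction k).toLinearMap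

theorem symbol_apply (a : A) : symbol k a = leftAction k a 1 := rfl

noncomputable def normalMonomial (m : Fin 2 →₀ ℕ) : A := Wx k ^ m 0 * Wd k ^ m 1

theorem symbol_Wx_pow_mul_Wd_pow (i j : ℕ) :
    symbol k (Wx k ^ i * Wd k ^ j) = X 0 ^ i * X 1 ^ j := by
  simp [symbol_apply, Module.End.mul_apply, LinearMap.pow_mulLeft,
    (pderiv 0).mulLeft_add_pow_apply_one (pderiv_X_of_ne (by decide : (1 : Fin 2) ≠ 0))]

theorem rightAction_Wx_pow_mul_Wd_pow (i j : ℕ) :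
    (rightAction k (Wx k ^ i * Wd k ^ j)).unop 1 = X 0 ^ i * X 1 ^ j := by
  simp [Module.End.mul_apply, LinearMap.pow_mulLeft, mul_comm,
    (pderiv 1).mulLeft_add_pow_apply_one (pderiv_X_of_ne (by decide : (0 : Fin 2) ≠ 1))]

theorem span_normalMonomial : Submodule.span k (Set.range (normalMonomial k)) = ⊤ := by
  have h_mem : ∀ i j, Wx k ^ i * Wd k ^ j ∈ Submodule.span k (Set.range (normalMonomial k)) :=
    fun i j => Submodule.subset_span
      ⟨Finsupp.single 0 i + Finsupp.single 1 j, by simp [normalMonomial]⟩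
  refine Submodule.span_range_eq_top_of_mul_mem (adjoin_Wx_Wd k) (by simpa using h_mem 0 0) ?_
  rintro m _ (rfl | rfl)
  · rcases Nat.eq_zero_or_eq_succ_pred (m 1) with h | h
    · simpa [normalMonomial, h, ← pow_succ] using h_mem (m 0 + 1) 0
    · rw [normalMonomial, h, mul_assoc, pow_succ_mul_eq_of_mul_eq_mul_add_one (Wd_mul_Wx k),
        mul_add, ← mul_assoc, ← pow_succ, mul_smul_comm]
      exact add_mem (h_mem _ _) (Submodule.smul_of_tower_mem _ _ (h_mem _ _))
  · simpa [normalMonomial, mul_assoc, ← pow_succ] using h_mem (m 0) (m 1 + 1)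

noncomputable def quantize : MvPolynomial (Fin 2) k →ₗ[k] A :=
  (basisMonomials (Fin 2) k).constr k (normalMonomial k)

theorem quantize_monomial (m : Fin 2 →₀ ℕ) (c : k) :
    quantize k (monomial m c) = c • normalMonomial k m := by
  have h : monomial m c = c • basisMonomials (Fin 2) k m := by simp [smul_monomial]
  rw [h, map_smul, quantize, Module.Basis.constr_basis]

theorem symbol_normalMonomial (m : Fin 2 →₀ ℕ) : symbol k (normalMonomial k m) = monomial m 1 := by
  rw [normalMonomial, symbol_Wx_pow_mul_Wd_pow, monomial_one_eq_X_pow_mul_X_pow]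

theorem symbol_quantize (f : MvPolynomial (Fin 2) k) : symbol k (quantize k f) = f := by
  induction f using MvPolynomial.induction_on' with
  | monomial m c =>
    rw [quantize_monomial, map_smul, symbol_normalMonomial, smul_monomial, smul_eq_mul, mul_one]
  | add f g hf hg => rw [map_add, map_add, hf, hg]

theorem quantize_surjective : Function.Surjective (quantize k) := by
  rw [← LinearMap.range_eq_top, quantize, Module.Basis.constr_range, span_normalMonomial]

theorem quantize_symbol (a : A) : quantize k (symbol k a) = a := by
  obtain ⟨f, rfl⟩ := quantize_surjective k a
  rw [symbol_quantize]

theorem symbol_injective : Function.Injective (symbol k) :=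
  Function.LeftInverse.injective (quantize_symbol k)

theorem symbol_eq_rightAction_apply_one (a : A) : symbol k a = (rightAction k a).unop 1 := by
  rw [← quantize_symbol k a]
  induction symbol k a using MvPolynomial.induction_on' with
  | monomial m c =>
    rw [quantize_monomial, map_smul, map_smul, MulOpposite.unop_smul, LinearMap.smul_apply,
      normalMonomial, symbol_Wx_pow_mul_Wd_pow, rightAction_Wx_pow_mul_Wd_pow]
  | add f g hf hg => simp [hf, hg]

theorem symbol_mul_eq_leftAction (a b : A) : symbol k (a * b) = leftAction k a (symbol k b) := by
  simp [symbol_apply, Module.End.mul_apply]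

theorem symbol_mul_eq_rightAction (a b : A) :
    symbol k (a * b) = (rightAction k b).unop (symbol k a) := by
  simp [symbol_eq_rightAction_apply_one, Module.End.mul_apply]

theorem symbol_Wd_mul_sub_mul_Wd (a : A) :
    symbol k (Wd k * a - a * Wd k) = pderiv 0 (symbol k a) := by
  rw [map_sub, symbol_mul_eq_leftAction k (Wd k), symbol_mul_eq_rightAction k a, leftAction_Wd,
    rightAction_Wd]
  simp

theorem symbol_mul_Wx_sub_Wx_mul (a : A) :
    symbol k (a * Wx k - Wx k * a) = pderiv 1 (symbol k a) := by
  rw [map_sub, symbol_mul_eq_rightAction k a, symbol_mul_eq_leftAction k (Wx k), leftAction_Wx,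
    rightAction_Wx]
  simp

theorem mem_center_iff_pderiv_symbol_eq_zero (a : A) :
    a ∈ Subalgebra.center k A ↔ ∀ i, pderiv i (symbol k a) = 0 := by
  rw [← Subalgebra.centralizer_eq_center_of_adjoin_eq_top (adjoin_Wx_Wd k),
    Subalgebra.mem_centralizer_iff, Fin.forall_fin_two, ← symbol_Wd_mul_sub_mul_Wd,
    ← symbol_mul_Wx_sub_Wx_mul, map_eq_zero_iff _ (symbol_injective k),
    map_eq_zero_iff _ (symbol_injective k), sub_eq_zero, sub_eq_zero]
  simp only [Set.mem_insert_iff, Set.mem_singleton_iff, forall_eq_or_imp, forall_eq]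
  rw [and_comm, eq_comm (a := a * Wx k)]

theorem quantize_mem_adjoin_Wx_pow_Wd_pow {p : ℕ} {f : MvPolynomial (Fin 2) k}
    (hf : ∀ m ∈ f.support, ∀ i, p ∣ m i) :
    quantize k f ∈ Algebra.adjoin k {Wx k ^ p, Wd k ^ p} := by
  rw [f.as_sum, map_sum]
  refine Subalgebra.sum_mem _ fun m hm => ?_
  obtain ⟨u, hu⟩ := hf m hm 0
  obtain ⟨v, hv⟩ := hf m hm 1
  rw [quantize_monomial, normalMonomial, hu, hv, pow_mul, pow_mul]
  exact Subalgebra.smul_mem _ (mul_mem (pow_mem (Algebra.subset_adjoin (by simp)) u)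
    (pow_mem (Algebra.subset_adjoin (by simp)) v)) _

variable (p : ℕ) [CharP k p]

theorem Wx_pow_mem_center : Wx k ^ p ∈ Subalgebra.center k A := by
  have h : symbol k (Wx k ^ p) = X 0 ^ p := by simpa using symbol_Wx_pow_mul_Wd_pow k p 0
  simp [mem_center_iff_pderiv_symbol_eq_zero, h]

theorem Wd_pow_mem_center : Wd k ^ p ∈ Subalgebra.center k A := by
  have h : symbol k (Wd k ^ p) = X 1 ^ p := by simpa using symbol_Wx_pow_mul_Wd_pow k 0 p
  simp [mem_center_iff_pderiv_symbol_eq_zero, h]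

end WeylAlgebra

theorem statement5_general (k : Type) [Field k] (p : ℕ) [CharP k p] :
    Subalgebra.center k (RingQuot (WeylRel k))
      = Algebra.adjoin k {Wx k ^ p, Wd k ^ p} := by
  refine le_antisymm (fun z hz => ?_) <| Algebra.adjoin_le <|
    Set.pair_subset (WeylAlgebra.Wx_pow_mem_center k p) (WeylAlgebra.Wd_pow_mem_center k p)
  rw [← WeylAlgebra.quantize_symbol k z]
  refine WeylAlgebra.quantize_mem_adjoin_Wx_pow_Wd_pow k fun m hm i => ?_
  exact dvd_of_mem_support_of_pderiv_eq_zero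
    ((WeylAlgebra.mem_center_iff_pderiv_symbol_eq_zero k z).mp hz i) hm

/-- In characteristic `p`, the center of the Weyl algebra is `k[x^p, d^p]`. -/
theorem statement5 (k : Type) [Field k] (p : ℕ) (hp : p.Prime) [CharP k p] :
    Subalgebra.center k (RingQuot (WeylRel k))
      = Algebra.adjoin k {Wx k ^ p, Wd k ^ p} :=
  statement5_general k p
end

section
/- Let $k$ be a field of characteristic $p > 0$. The Weyl algebra $A = k\langle x, d\rangle/(dx - xd - 1)$ is a free module of rank $p^2$ over its center $k[x^p, d^p]$, with basis the monomials $x^i d^j$ for $0 \le i, j \le p-1$. -/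
/-!
The monomials `x^a d^b`, `a, b ∈ ℕ`, form a `k`-basis of the Weyl algebra `A`. They span because
right multiplication by `x` and `d` preserves their span (`d^(n+1) x = x d^(n+1) + (n+1) d^n`), and
they are independent because `A` acts on `k[X, Y]` by `x ↦ X·`, `d ↦ ∂/∂X + Y·`, which sends
`x^a d^b` to the operator mapping `1` to `X^a Y^b`.

In characteristic `p` the same commutation rule makes `d^p` commute with `x`, so the algebra `Z`
generated by `x^p` and `d^p` is spanned over `k` by the `(x^p)^a (d^p)^b`, and
`(x^p)^a (d^p)^b · x^i d^j = x^(ap+i) d^(bp+j)`. Division with remainder by `p` therefore turns the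
`k`-basis of `A` into the products of a spanning family of `Z` with the `x^i d^j`, `0 ≤ i, j < p`,
which forces the latter to be a `Z`-basis.
-/

open Submodule Set Finsupp

section Tower

variable {R S M ι κ : Type*} [CommSemiring R] [Semiring S] [Module R S] [AddCommMonoid M]
  [Module R M] [Module S M] [IsScalarTower R S M] {w : κ → S} {v : ι → M}

theorem LinearIndependent.of_smul_of_span_eq_top (hw : span R (range w) = ⊤)
    (h : LinearIndependent R fun q : ι × κ ↦ w q.2 • v q.1) : LinearIndependent S v := by
  have hsurj : Function.Surjective (mapRange.linearMap (linearCombination R w) :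
      (ι →₀ κ →₀ R) →ₗ[R] ι →₀ S) :=
    mapRange_surjective _ (map_zero _)
      (LinearMap.range_eq_top.1 (by rwa [range_linearCombination]))
  have hcomb (m : ι →₀ κ →₀ R) :
      linearCombination R (fun q : ι × κ ↦ w q.2 • v q.1) ((curryLinearEquiv R).symm m) =
        linearCombination S v (mapRange.linearMap (linearCombination R w) m) := by
    simpa using LinearMap.congr_fun (linearCombination_smul R) ((curryLinearEquiv R).symm m)
  intro l₁ l₂ hl
  obtain ⟨m₁, rfl⟩ := hsurj l₁
  obtain ⟨m₂, rfl⟩ := hsurj l₂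
  have hm := @h ((curryLinearEquiv R).symm m₁) ((curryLinearEquiv R).symm m₂)
    (by rw [hcomb, hcomb, hl])
  rw [(curryLinearEquiv R).symm.injective hm]

theorem Submodule.span_eq_top_of_span_smul_eq_top
    (h : span R (range fun q : ι × κ ↦ w q.2 • v q.1) = ⊤) : span S (range v) = ⊤ := by
  have hle : span R (range fun q : ι × κ ↦ w q.2 • v q.1) ≤ (span S (range v)).restrictScalars R :=
    span_le.2 <| range_subset_iff.2 fun q ↦ smul_mem _ _ (subset_span (mem_range_self q.1))
  exact eq_top_iff.2 fun x _ ↦ hle (h ▸ mem_top)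

end Tower

section CanonicalCommutation

variable {R : Type*} [Ring R] {a b : R}

theorem pow_succ_mul_of_mul_eq_mul_add_one (h : b * a = a * b + 1) (n : ℕ) :
    b ^ (n + 1) * a = a * b ^ (n + 1) + (n + 1) • b ^ n := by
  induction n with
  | zero => simpa using h
  | succ n ih =>
    rw [pow_succ', mul_assoc, ih, mul_add, ← mul_assoc, h, mul_smul_comm, ← pow_succ', add_mul,
      one_mul, mul_assoc, ← pow_succ', succ_nsmul _ (n + 1)]
    abel

theorem commute_pow_of_mul_eq_mul_add_one (h : b * a = a * b + 1) {p : ℕ} (hp : (p : R) = 0) :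
    Commute (b ^ p) a := by
  cases p with
  | zero => simp
  | succ n =>
    rw [Commute, SemiconjBy, pow_succ_mul_of_mul_eq_mul_add_one h, nsmul_eq_mul, hp, zero_mul,
      add_zero]

end CanonicalCommutation

theorem MvPolynomial.linearIndependent_X_pow_mul_X_pow {σ R : Type*} [CommSemiring R] {i j : σ}
    (hij : i ≠ j) :
    LinearIndependent R fun q : ℕ × ℕ ↦ (X i ^ q.1 * X j ^ q.2 : MvPolynomial σ R) := by
  have hinj : Function.Injective fun q : ℕ × ℕ ↦ Finsupp.single i q.1 + Finsupp.single j q.2 := by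
    intro q r hqr
    have hi := DFunLike.congr_fun hqr i
    have hj := DFunLike.congr_fun hqr j
    simp [hij, hij.symm] at hi hj
    exact Prod.ext hi hj
  convert (basisMonomials σ R).linearIndependent.comp _ hinj with q
  simp [coe_basisMonomials, X_pow_eq_monomial, monomial_mul]

theorem Algebra.mem_span_pow_mul_pow_of_mem_adjoin_pair {R A : Type*} [CommSemiring R]
    [Semiring A] [Algebra R A] {a b : A} (hab : Commute a b) {z : A}
    (hz : z ∈ Algebra.adjoin R {a, b}) :
    z ∈ span R (range fun q : ℕ × ℕ ↦ a ^ q.1 * b ^ q.2) := by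
  set M := span R (range fun q : ℕ × ℕ ↦ a ^ q.1 * b ^ q.2)
  have hmem (q : ℕ × ℕ) : a ^ q.1 * b ^ q.2 ∈ M := subset_span ⟨q, rfl⟩
  have hmul (y y' : A) (hy : y ∈ M) (hy' : y' ∈ M) : y * y' ∈ M := by
    have hyy' := Submodule.mul_mem_mul hy hy'
    rw [span_mul_span] at hyy'
    refine span_le.2 ?_ hyy'
    rintro - ⟨-, ⟨q, rfl⟩, -, ⟨q', rfl⟩, rfl⟩
    have hqq' := hmem (q + q')
    rwa [Prod.fst_add, Prod.snd_add, pow_add, pow_add,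
      ← (hab.pow_pow q'.1 q.2).symm.mul_mul_mul_comm] at hqq'
  refine Algebra.adjoin_le (S := M.toSubalgebra (by simpa using hmem 0) hmul) ?_ hz
  rintro _ (rfl | rfl)
  · simpa using hmem (1, 0)
  · simpa using hmem (0, 1)

namespace Weyl

variable (k : Type) [Field k]

local notation "A" => RingQuot (WeylRel k)

theorem Wd_mul_Wx : Wd k * Wx k = Wx k * Wd k + 1 := by
  simpa [Wx, Wd] using RingQuot.mkAlgHom_rel k (WeylRel.rel (k := k))

noncomputable def monomial (q : ℕ × ℕ) : A := Wx k ^ q.1 * Wd k ^ q.2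

open MvPolynomial in
noncomputable def polyRep : A →ₐ[k] Module.End k (MvPolynomial Bool k) :=
  RingQuot.liftAlgHom k ⟨FreeAlgebra.lift k fun b ↦
      cond b ((pderiv false).toLinearMap + LinearMap.mulLeft k (X true))
        (LinearMap.mulLeft k (X false)), by
    rintro _ _ ⟨⟩
    refine LinearMap.ext fun f ↦ ?_
    simp only [map_mul, map_add, map_one, FreeAlgebra.lift_ι_apply, cond_true, cond_false,
      Module.End.mul_apply, Module.End.one_apply, LinearMap.mulLeft_apply, LinearMap.add_apply,
      Derivation.coeFn_coe, Derivation.leibniz, smul_eq_mul, pderiv_X, Pi.single_eq_same]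
    ring⟩

open MvPolynomial in
theorem polyRep_Wx : polyRep k (Wx k) = LinearMap.mulLeft k (X false) := by
  simp [polyRep, Wx]

open MvPolynomial in
theorem polyRep_Wd :
    polyRep k (Wd k) = (pderiv false).toLinearMap + LinearMap.mulLeft k (X true) := by
  simp [polyRep, Wd]

open MvPolynomial in
theorem polyRep_monomial_one (q : ℕ × ℕ) :
    polyRep k (monomial k q) 1 = (X false ^ q.1 * X true ^ q.2 : MvPolynomial Bool k) := by
  have hd (n : ℕ) : (polyRep k (Wd k) ^ n) 1 = (X true ^ n : MvPolynomial Bool k) := by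
    induction n with
    | zero => simp
    | succ n ih =>
      rw [pow_succ', Module.End.mul_apply, ih, polyRep_Wd]
      simp [pow_succ']
  simp [monomial, hd, polyRep_Wx]

theorem linearIndependent_monomial : LinearIndependent k (monomial k) := by
  refine LinearIndependent.of_comp ((LinearMap.applyₗ 1).comp (polyRep k).toLinearMap) ?_
  have happly : ((LinearMap.applyₗ 1).comp (polyRep k).toLinearMap) ∘ monomial k =
      fun q ↦ MvPolynomial.X false ^ q.1 * MvPolynomial.X true ^ q.2 :=
    funext (polyRep_monomial_one k)
  rw [happly]
  exact MvPolynomial.linearIndependent_X_pow_mul_X_pow Bool.false_ne_true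

theorem submodule_eq_top_of_mul_mem {S : Submodule k A} (h1 : 1 ∈ S) (hx : ∀ a ∈ S, a * Wx k ∈ S)
    (hd : ∀ a ∈ S, a * Wd k ∈ S) : S = ⊤ := by
  suffices h : ∀ f, ∀ a ∈ S, a * RingQuot.mkAlgHom k (WeylRel k) f ∈ S by
    refine eq_top_iff.2 fun a _ ↦ ?_
    obtain ⟨f, rfl⟩ := RingQuot.mkAlgHom_surjective k (WeylRel k) a
    simpa using h f 1 h1
  intro f
  induction f using FreeAlgebra.induction with
  | grade0 r =>
    intro a ha
    rw [AlgHom.commutes, ← Algebra.commutes, ← Algebra.smul_def]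
    exact S.smul_mem r ha
  | grade1 b => cases b <;> assumption
  | mul f g ihf ihg =>
    intro a ha
    rw [map_mul, ← mul_assoc]
    exact ihg _ (ihf _ ha)
  | add f g ihf ihg =>
    intro a ha
    rw [map_add, mul_add]
    exact add_mem (ihf a ha) (ihg a ha)

theorem monomial_mul_Wd (q : ℕ × ℕ) : monomial k q * Wd k = monomial k (q.1, q.2 + 1) := by
  rw [monomial, monomial, mul_assoc, ← pow_succ]

theorem monomial_succ_mul_Wx (i j : ℕ) :
    monomial k (i, j + 1) * Wx k = monomial k (i + 1, j + 1) + (j + 1) • monomial k (i, j) := by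
  simp only [monomial]
  rw [mul_assoc, pow_succ_mul_of_mul_eq_mul_add_one (Wd_mul_Wx k), mul_add, ← mul_assoc,
    ← pow_succ, mul_smul_comm]

theorem span_monomial_eq_top : span k (range (monomial k)) = ⊤ := by
  have hmem (q : ℕ × ℕ) : monomial k q ∈ span k (range (monomial k)) := subset_span ⟨q, rfl⟩
  have hright {b : A} (hb : ∀ q, monomial k q * b ∈ span k (range (monomial k)))
      (a : A) (ha : a ∈ span k (range (monomial k))) : a * b ∈ span k (range (monomial k)) :=
    span_le (p := (span k (range (monomial k))).comap (LinearMap.mulRight k b)).2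
      (range_subset_iff.2 hb) ha
  refine submodule_eq_top_of_mul_mem k (by simpa [monomial] using hmem (0, 0))
    (hright fun ⟨i, j⟩ ↦ ?_) (hright fun q ↦ monomial_mul_Wd k q ▸ hmem _)
  cases j with
  | zero => simpa [monomial, pow_succ] using hmem (i + 1, 0)
  | succ j =>
    rw [monomial_succ_mul_Wx]
    exact add_mem (hmem _) (nsmul_mem (hmem _) _)

theorem commute_Wd_pow_Wx (p : ℕ) [CharP k p] : Commute (Wd k ^ p) (Wx k) :=
  commute_pow_of_mul_eq_mul_add_one (Wd_mul_Wx k) <| by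
    rw [← map_natCast (algebraMap k A), CharP.cast_eq_zero, map_zero]

theorem pow_mul_pow_mul_monomial (p : ℕ) [CharP k p] (a b i j : ℕ) :
    (Wx k ^ p) ^ a * (Wd k ^ p) ^ b * monomial k (i, j) = monomial k (a * p + i, b * p + j) := by
  have hc : Commute ((Wd k ^ p) ^ b) (Wx k ^ i) := ((commute_Wd_pow_Wx k p).pow_left b).pow_right i
  rw [monomial, monomial, pow_add, pow_add, pow_mul', pow_mul', hc.mul_mul_mul_comm]

end Weyl

/-- In characteristic `p`, the Weyl algebra is free of rank `p^2` over its center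
`k[x^p, d^p]`, with basis the monomials `x^i * d^j`, `0 ≤ i, j ≤ p - 1`. -/
theorem statement6 (k : Type) [Field k] (p : ℕ) (hp : p.Prime) [CharP k p] :
    ∃ b : Module.Basis (Fin p × Fin p) (Algebra.adjoin k {Wx k ^ p, Wd k ^ p})
        (RingQuot (WeylRel k)),
      ∀ ij : Fin p × Fin p, b ij = Wx k ^ (ij.1 : ℕ) * Wd k ^ (ij.2 : ℕ) := by
  have : NeZero p := ⟨hp.ne_zero⟩
  set Z := Algebra.adjoin k {Wx k ^ p, Wd k ^ p}
  let w (q : ℕ × ℕ) : Z := ⟨(Wx k ^ p) ^ q.1 * (Wd k ^ p) ^ q.2,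
    mul_mem (pow_mem (Algebra.subset_adjoin (by simp)) _)
      (pow_mem (Algebra.subset_adjoin (by simp)) _)⟩
  let v (ij : Fin p × Fin p) := Weyl.monomial k (ij.1, ij.2)
  let e : (Fin p × Fin p) × (ℕ × ℕ) ≃ ℕ × ℕ := (Equiv.prodComm _ _).trans <|
    (Equiv.prodProdProdComm _ _ _ _).trans <|
      (Nat.divModEquiv p).symm.prodCongr (Nat.divModEquiv p).symm
  have hwv : (fun q : (Fin p × Fin p) × (ℕ × ℕ) ↦ w q.2 • v q.1) = Weyl.monomial k ∘ e :=
    funext fun q ↦ Weyl.pow_mul_pow_mul_monomial k p _ _ _ _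
  have hw : span k (range w) = ⊤ := by
    refine eq_top_iff.2 fun z _ ↦ (apply_mem_span_image_iff_mem_span
      (f := Z.val.toLinearMap) Subtype.val_injective).1 ?_
    rw [← range_comp]
    exact Algebra.mem_span_pow_mul_pow_of_mem_adjoin_pair
      ((Weyl.commute_Wd_pow_Wx k p).pow_right p).symm z.2
  have hli : LinearIndependent Z v := .of_smul_of_span_eq_top hw <| by
    rw [hwv]; exact (Weyl.linearIndependent_monomial k).comp e e.injective
  have hspan : span Z (range v) = ⊤ := span_eq_top_of_span_smul_eq_top <| by
    rw [hwv, range_comp, e.range_eq_univ, image_univ, Weyl.span_monomial_eq_top]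
  exact ⟨.mk hli hspan.ge, fun ij ↦ Module.Basis.mk_apply hli hspan.ge ij⟩
end

section
/- Let $k$ be a field of characteristic $p > 0$ and let $B = k\langle x, d\rangle/(dx - xd - 1,\ d^p)$. The center of $B$ is $k[x^p]$. -/
/-- The defining relations `d * x = x * d + 1` and `d^p = 0` of the reduced Weyl
algebra `B = k⟨x,d⟩/(dx - xd - 1, d^p)` (generator `false` is `x`, `true` is `d`). -/
inductive RWRel (k : Type) [Field k] (p : ℕ) :
    FreeAlgebra k Bool → FreeAlgebra k Bool → Prop
  | weyl : RWRel k p (FreeAlgebra.ι k true * FreeAlgebra.ι k false)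
      (FreeAlgebra.ι k false * FreeAlgebra.ι k true + 1)
  | dp : RWRel k p (FreeAlgebra.ι k true ^ p) 0

/-- The generator `x` of the reduced Weyl algebra. -/
noncomputable def Bx (k : Type) [Field k] (p : ℕ) : RingQuot (RWRel k p) :=
  RingQuot.mkAlgHom k (RWRel k p) (FreeAlgebra.ι k false)

/-- The generator `d` of the reduced Weyl algebra. -/
noncomputable def Bd (k : Type) [Field k] (p : ℕ) : RingQuot (RWRel k p) :=
  RingQuot.mkAlgHom k (RWRel k p) (FreeAlgebra.ι k true)

namespace RWAux

open Polynomial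

variable (k : Type) [Field k] (p : ℕ)

lemma d_mul_x : Bd k p * Bx k p = Bx k p * Bd k p + 1 := by
  have h := RingQuot.mkAlgHom_rel k (RWRel.weyl (k := k) (p := p))
  simpa [Bx, Bd, map_mul, map_add, map_one] using h

lemma d_pow_p : Bd k p ^ p = 0 := by
  have h := RingQuot.mkAlgHom_rel k (RWRel.dp (k := k) (p := p))
  simpa [Bd, map_pow] using h

/-- The evaluation `k[X] → B`, `X ↦ x`. -/
noncomputable def ev : Polynomial k →ₐ[k] RingQuot (RWRel k p) := aeval (Bx k p)

lemma D_pow_p [CharP k p] (hp : 0 < p) :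
    (Polynomial.derivative : Module.End k (Polynomial k)) ^ p = 0 := by
  apply LinearMap.ext
  intro f
  rw [Module.End.pow_apply, LinearMap.zero_apply]
  induction f using Polynomial.induction_on' with
  | add f g hf hg => simp [iterate_map_add, hf, hg]
  | monomial n a =>
      rw [← C_mul_X_pow_eq_monomial, iterate_derivative_C_mul,
        iterate_derivative_X_pow_eq_smul]
      have : ((n.descFactorial p : k)) = 0 := by
        rw [CharP.cast_eq_zero_iff k p]
        exact dvd_trans (Nat.dvd_factorial hp le_rfl)
          (Nat.factorial_dvd_descFactorial n p)
      rw [this, zero_smul, mul_zero]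

end RWAux

namespace RWAux
open Polynomial
variable (k : Type) [Field k] (p : ℕ)

lemma D_mul_MX : (Polynomial.derivative : Module.End k (Polynomial k)) *
    (Algebra.lmul k (Polynomial k) X) =
    (Algebra.lmul k (Polynomial k) X) * Polynomial.derivative + 1 := by
  apply LinearMap.ext; intro f
  simp [Module.End.mul_apply, derivative_mul, add_comm]

/-- The representation of `B` on `k[X]`: `x` acts by multiplication, `d` by `d/dX`. -/
noncomputable def rep [CharP k p] (hp : 0 < p) :
    RingQuot (RWRel k p) →ₐ[k] Module.End k (Polynomial k) :=
  RingQuot.liftAlgHom k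
    ⟨FreeAlgebra.lift k (fun b => if b then
        (Polynomial.derivative : Module.End k (Polynomial k))
      else Algebra.lmul k (Polynomial k) X), by
    rintro a b (h | h)
    · simp only [map_mul, map_add, map_one, FreeAlgebra.lift_ι_apply, if_true, if_false]
      exact D_mul_MX k
    · simp only [map_pow, map_zero, FreeAlgebra.lift_ι_apply, if_true]
      exact D_pow_p k p hp⟩

variable [CharP k p] (hp : 0 < p)

lemma rep_Bx : rep k p hp (Bx k p) = Algebra.lmul k (Polynomial k) X := by
  rw [rep, Bx, RingQuot.liftAlgHom_mkAlgHom_apply, FreeAlgebra.lift_ι_apply, if_neg]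
  simp

lemma rep_Bd : rep k p hp (Bd k p) = Polynomial.derivative := by
  rw [rep, Bd, RingQuot.liftAlgHom_mkAlgHom_apply, FreeAlgebra.lift_ι_apply, if_pos rfl]

lemma rep_ev (q : Polynomial k) :
    rep k p hp (ev k p q) = Algebra.lmul k (Polynomial k) q := by
  rw [ev, ← Polynomial.aeval_algHom_apply, rep_Bx,
    Polynomial.aeval_algHom_apply (Algebra.lmul k (Polynomial k)) X q,
    Polynomial.aeval_X_left_apply]

end RWAux

namespace RWAux
open Polynomial
variable (k : Type) [Field k] (p : ℕ)

lemma d_mul_xpow (n : ℕ) : Bd k p * Bx k p ^ (n + 1)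
    = Bx k p ^ (n + 1) * Bd k p + ((n + 1 : ℕ) : k) • Bx k p ^ n := by
  induction n with
  | zero => simpa using d_mul_x k p
  | succ n ih =>
      have : Bd k p * Bx k p ^ (n + 2) = (Bd k p * Bx k p ^ (n + 1)) * Bx k p := by
        rw [mul_assoc, ← pow_succ]
      rw [this, ih, add_mul, mul_assoc, d_mul_x k p, smul_mul_assoc, ← pow_succ]
      rw [mul_add, ← mul_assoc, ← pow_succ, mul_one]
      have hc : ((n + 2 : ℕ) : k) = ((n + 1 : ℕ) : k) + 1 := by push_cast; ring
      rw [hc, add_smul, one_smul]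
      abel

lemma x_mul_ev (q : Polynomial k) :
    Bx k p * ev k p q = ev k p (X * q) := by
  rw [map_mul, ev, aeval_X]

lemma d_mul_ev (q : Polynomial k) :
    Bd k p * ev k p q = ev k p q * Bd k p + ev k p (derivative q) := by
  induction q using Polynomial.induction_on with
  | C a =>
      simp only [ev, aeval_C, derivative_C, map_zero, add_zero]
      rw [Algebra.commutes]
  | add f g hf hg =>
      rw [map_add, mul_add, hf, hg, map_add, map_add, add_mul]
      abel
  | monomial n a ih =>
      have hq : (C a * X ^ (n + 1)) = (C a * X ^ n) * X := by ring
      rw [hq, map_mul, ev, aeval_X, ← ev, ← mul_assoc, ih, add_mul, mul_assoc,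
        d_mul_x k p, mul_add, mul_one, ← mul_assoc]
      rw [derivative_mul (f := C a * X ^ n) (g := X), derivative_X, mul_one]
      simp only [map_mul, map_add, ev, aeval_X]
      abel

/-- Writing an element of `B` in normal form `∑ f j * d^j`. -/
noncomputable def T : (Fin p → Polynomial k) →ₗ[k] RingQuot (RWRel k p) where
  toFun f := ∑ j : Fin p, ev k p (f j) * Bd k p ^ (j : ℕ)
  map_add' f g := by
    simp only [Pi.add_apply, map_add, add_mul]
    rw [Finset.sum_add_distrib]
  map_smul' a f := by
    simp only [Pi.smul_apply, map_smul, smul_mul_assoc, RingHom.id_apply]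
    rw [Finset.smul_sum]

lemma T_single (q : Polynomial k) (j : Fin p) :
    T k p (Pi.single j q) = ev k p q * Bd k p ^ (j : ℕ) := by
  classical
  rw [T]
  dsimp only [LinearMap.coe_mk, AddHom.coe_mk]
  rw [Finset.sum_eq_single_of_mem j (Finset.mem_univ j)]
  · rw [Pi.single_eq_same]
  · intro j' _ hj'
    rw [Pi.single_eq_of_ne hj', map_zero, zero_mul]

variable {k p} in
lemma basic_mem (q : Polynomial k) {j : ℕ} (hj : j < p) :
    ev k p q * Bd k p ^ j ∈ LinearMap.range (T k p) :=
  ⟨Pi.single ⟨j, hj⟩ q, T_single k p q ⟨j, hj⟩⟩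

lemma T_surjective (hp : 0 < p) : Function.Surjective (T k p) := by
  intro b
  have hb : b ∈ LinearMap.range (T k p) := by
    obtain ⟨a, rfl⟩ := RingQuot.mkAlgHom_surjective k (RWRel k p) b
    have one_mem : (1 : RingQuot (RWRel k p)) ∈ LinearMap.range (T k p) := by
      have := basic_mem (k := k) (1 : Polynomial k) hp
      simpa using this
    have key : ∀ a : FreeAlgebra k Bool, ∀ c ∈ LinearMap.range (T k p),
        RingQuot.mkAlgHom k (RWRel k p) a * c ∈ LinearMap.range (T k p) := by
      intro a
      induction a using FreeAlgebra.induction with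
      | grade0 r =>
          intro c hc
          rw [AlgHom.commutes, Algebra.smul_def r c |>.symm]
          exact Submodule.smul_mem _ r hc
      | grade1 v =>
          rintro c ⟨f, rfl⟩
          cases v
          · -- x * T f
            refine ⟨fun j => X * f j, ?_⟩
            show ∑ j : Fin p, ev k p (X * f j) * Bd k p ^ (j : ℕ) = _
            rw [show RingQuot.mkAlgHom k (RWRel k p) (FreeAlgebra.ι k false) = Bx k p from rfl]
            show _ = Bx k p * ∑ j : Fin p, ev k p (f j) * Bd k p ^ (j : ℕ)
            rw [Finset.mul_sum]
            refine Finset.sum_congr rfl fun j _ => ?_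
            rw [← mul_assoc, x_mul_ev]
          · -- d * T f
            rw [show RingQuot.mkAlgHom k (RWRel k p) (FreeAlgebra.ι k true) = Bd k p from rfl]
            show Bd k p * ∑ j : Fin p, ev k p (f j) * Bd k p ^ (j : ℕ) ∈ _
            rw [Finset.mul_sum]
            refine Submodule.sum_mem _ fun j _ => ?_
            rw [← mul_assoc, d_mul_ev, add_mul, mul_assoc, ← pow_succ']
            refine Submodule.add_mem _ ?_ (basic_mem _ j.isLt)
            rcases Nat.lt_or_ge ((j : ℕ) + 1) p with h | h
            · exact basic_mem _ h
            · have h' : (j : ℕ) + 1 = p := le_antisymm j.isLt h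
              rw [h', d_pow_p, mul_zero]
              exact Submodule.zero_mem _
      | mul a b ha hb =>
          intro c hc
          rw [map_mul, mul_assoc]
          exact ha _ (hb _ hc)
      | add a b ha hb =>
          intro c hc
          rw [map_add, add_mul]
          exact Submodule.add_mem _ (ha _ hc) (hb _ hc)
    have := key a 1 one_mem
    simpa using this
  exact hb

end RWAux

namespace RWAux
open Polynomial
variable (k : Type) [Field k] (p : ℕ) [CharP k p]

lemma rep_T_apply (hp : 0 < p) (f : Fin p → Polynomial k) (m : ℕ) :
    rep k p hp (T k p f) (X ^ m)
      = ∑ j : Fin p, (m.descFactorial (j : ℕ) : k) • (f j * X ^ (m - (j : ℕ))) := by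
  rw [T]
  dsimp only [LinearMap.coe_mk, AddHom.coe_mk]
  rw [map_sum, LinearMap.coe_sum, Finset.sum_apply]
  refine Finset.sum_congr rfl fun j _ => ?_
  rw [map_mul, rep_ev, map_pow (rep k p hp) (Bd k p) (j : ℕ), rep_Bd,
    Module.End.mul_apply, Module.End.pow_apply,
    iterate_derivative_X_pow_eq_smul, map_smul]
  simp only [Algebra.coe_lmul_eq_mul, LinearMap.mul_apply']

lemma rep_T_eq_zero (hpp : p.Prime) (f : Fin p → Polynomial k)
    (h : rep k p hpp.pos (T k p f) = 0) : f = 0 := by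
  have key : ∀ m : ℕ, ∀ hm : m < p, f ⟨m, hm⟩ = 0 := by
    intro m
    induction m using Nat.strong_induction_on with
    | _ m ih =>
      intro hm
      have h0 : rep k p hpp.pos (T k p f) (X ^ m) = 0 := by rw [h]; rfl
      rw [rep_T_apply] at h0
      rw [Finset.sum_eq_single_of_mem (⟨m, hm⟩ : Fin p) (Finset.mem_univ _)] at h0
      · rw [Nat.sub_self, pow_zero, mul_one, Nat.descFactorial_self] at h0
        have hfac : ((m.factorial : k)) ≠ 0 := by
          rw [Ne, CharP.cast_eq_zero_iff k p]
          intro hdvd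
          exact absurd ((Nat.Prime.dvd_factorial hpp).mp hdvd) (not_le.mpr hm)
        rcases smul_eq_zero.mp h0 with h' | h'
        · exact absurd h' hfac
        · exact h'
      · intro j _ hj
        rcases Nat.lt_trichotomy (j : ℕ) m with hlt | heq | hgt
        · have hz : f j = 0 := by
            have := ih (j : ℕ) hlt j.isLt
            rwa [Fin.eta] at this
          rw [hz, zero_mul, smul_zero]
        · exact absurd (Fin.ext heq) hj
        · rw [Nat.descFactorial_eq_zero_iff_lt.mpr hgt, Nat.cast_zero, zero_smul]
  funext j
  have := key (j : ℕ) j.isLt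
  rwa [Fin.eta] at this

lemma rep_injective (hpp : p.Prime) : Function.Injective (rep k p hpp.pos) := by
  refine (injective_iff_map_eq_zero _).mpr fun b hb => ?_
  obtain ⟨f, rfl⟩ := T_surjective k p hpp.pos b
  rw [rep_T_eq_zero k p hpp f hb, map_zero]

end RWAux


open Polynomial RWAux in
/-- In characteristic `p`, the center of `B = k⟨x,d⟩/(dx - xd - 1, d^p)` is `k[x^p]`. -/
theorem statement14 (k : Type) [Field k] (p : ℕ) (hp : p.Prime) [CharP k p] :
    Subalgebra.center k (RingQuot (RWRel k p))
      = Algebra.adjoin k {Bx k p ^ p} := by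
  apply le_antisymm
  · intro z hz
    have hcom : ∀ b, b * z = z * b := Subalgebra.mem_center_iff.mp hz
    set E := rep k p hp.pos z with hE
    have hEx : ∀ u : Polynomial k, E (X * u) = X * E u := by
      intro u
      have h1 : rep k p hp.pos (Bx k p * z) = rep k p hp.pos (z * Bx k p) := by
        rw [hcom]
      rw [map_mul, map_mul, rep_Bx, ← hE] at h1
      have h2 := LinearMap.ext_iff.mp h1 u
      simpa only [Module.End.mul_apply, Algebra.coe_lmul_eq_mul,
        LinearMap.mul_apply'] using h2.symm
    have hmul : ∀ q u : Polynomial k, E (q * u) = q * E u := by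
      intro q
      induction q using Polynomial.induction_on with
      | C a =>
          intro u
          rw [← Polynomial.smul_eq_C_mul, ← Polynomial.smul_eq_C_mul, map_smul]
      | add f g hf hg =>
          intro u
          rw [add_mul, map_add, hf, hg, add_mul]
      | monomial n a ihq =>
          intro u
          have hrw : C a * X ^ (n + 1) * u = X * (C a * X ^ n * u) := by ring
          rw [hrw, hEx, ihq]
          ring
    set e := E 1 with he
    have hEu : ∀ u, E u = u * e := by
      intro u
      calc E u = E (u * 1) := by rw [mul_one]
        _ = u * E 1 := hmul u 1
    have hder : derivative e = 0 := by
      have h1 : rep k p hp.pos (Bd k p * z) = rep k p hp.pos (z * Bd k p) := by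
        rw [hcom]
      rw [map_mul, map_mul, rep_Bd, ← hE] at h1
      have h2 := LinearMap.ext_iff.mp h1 X
      rw [Module.End.mul_apply, Module.End.mul_apply, derivative_X, hEu X, hEu 1,
        one_mul] at h2
      rw [show Polynomial.derivative (X * e) = derivative X * e + X * derivative e from
        derivative_mul, derivative_X, one_mul] at h2
      have h3 : X * derivative e = 0 := by rwa [add_eq_left] at h2
      exact (mul_eq_zero.mp h3).resolve_left X_ne_zero
    have hzev : z = ev k p e := by
      apply rep_injective k p hp
      rw [rep_ev]
      apply LinearMap.ext; intro u
      simp only [Algebra.coe_lmul_eq_mul, LinearMap.mul_apply']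
      rw [← hE, hEu u, mul_comm]
    have hexp : Polynomial.expand k p (Polynomial.contract p e) = e :=
      Polynomial.expand_contract p hder hp.ne_zero
    rw [hzev, ← hexp, ev, Polynomial.expand_aeval,
      Algebra.adjoin_singleton_eq_range_aeval]
    exact ⟨Polynomial.contract p e, rfl⟩
  · apply Algebra.adjoin_le
    rw [Set.singleton_subset_iff, SetLike.mem_coe, Subalgebra.mem_center_iff]
    intro b
    obtain ⟨a, rfl⟩ := RingQuot.mkAlgHom_surjective k (RWRel k p) b
    induction a using FreeAlgebra.induction with
    | grade0 r => rw [AlgHom.commutes]; exact Algebra.commutes r _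
    | grade1 v =>
        cases v with
        | false =>
            show Bx k p * Bx k p ^ p = Bx k p ^ p * Bx k p
            exact ((Commute.refl (Bx k p)).pow_right p).eq
        | true =>
            show Bd k p * Bx k p ^ p = Bx k p ^ p * Bd k p
            obtain ⟨n, rfl⟩ : ∃ n, n + 1 = p := ⟨p - 1, Nat.succ_pred_eq_of_pos hp.pos⟩
            rw [d_mul_xpow, CharP.cast_eq_zero, zero_smul, add_zero]
    | mul a b ha hb => rw [map_mul, mul_assoc, hb, ← mul_assoc, ha, mul_assoc]
    | add a b ha hb => rw [map_add, add_mul, ha, hb, mul_add]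
end

section
/- Let $k$ be a field of characteristic $p > 0$ and let $B = k\langle x, d\rangle/(dx - xd - 1, d^p)$, a free left $k[x]$-module with basis $1, d, \dots, d^{p-1}$. Write elements of $B \otimes_{k[x]} B$ uniquely as $\sum_{0 \le i,j \le p-1} f_{ij}(x)\, d^i \otimes d^j$. If such an element is annihilated by right multiplication by $d \otimes 1 - 1 \otimes d$, then $f_{ij} = 0$ whenever $i + j < p - 1$. -/
set_option maxHeartbeats 1000000
set_option maxSynthPendingDepth 3
set_option synthInstance.maxHeartbeats 400000

open scoped TensorProduct

/-- The canonical map `k[x] → B` sending `X` to `x`. -/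
noncomputable def phi (k : Type) [Field k] (p : ℕ) : Polynomial k →+* RingQuot (RWRel k p) :=
  (Polynomial.aeval (Bx k p)).toRingHom

/-- `B` as a `k[x]`-module via left multiplication through `phi`. -/
noncomputable instance (k : Type) [Field k] (p : ℕ) :
    Module (Polynomial k) (RingQuot (RWRel k p)) :=
  Module.compHom _ (phi k p)

/-- Right multiplication by `c` on `B`, as a `k[x]`-linear map. -/
noncomputable def mulRightLin (k : Type) [Field k] (p : ℕ) (c : RingQuot (RWRel k p)) :
    RingQuot (RWRel k p) →ₗ[Polynomial k] RingQuot (RWRel k p) where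
  toFun a := a * c
  map_add' a b := add_mul a b c
  map_smul' f a := by
    show (phi k p f * a) * c = phi k p f * (a * c)
    rw [mul_assoc]

/-- Right multiplication by `δ = d ⊗ 1 - 1 ⊗ d` on `B ⊗_{k[x]} B`, acting
componentwise on pure tensors. -/
noncomputable def rdelta (k : Type) [Field k] (p : ℕ) :
    RingQuot (RWRel k p) ⊗[Polynomial k] RingQuot (RWRel k p) →ₗ[Polynomial k]
      RingQuot (RWRel k p) ⊗[Polynomial k] RingQuot (RWRel k p) :=
  TensorProduct.map (mulRightLin k p (Bd k p))
      (LinearMap.id : RingQuot (RWRel k p) →ₗ[Polynomial k] RingQuot (RWRel k p)) -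
    TensorProduct.map
      (LinearMap.id : RingQuot (RWRel k p) →ₗ[Polynomial k] RingQuot (RWRel k p))
      (mulRightLin k p (Bd k p))

/-- Right multiplication by `σ = ∑ d^(p-1-i) ⊗ d^i` on `B ⊗_{k[x]} B`, acting
componentwise on pure tensors. -/
noncomputable def rsigma (k : Type) [Field k] (p : ℕ) :
    RingQuot (RWRel k p) ⊗[Polynomial k] RingQuot (RWRel k p) →ₗ[Polynomial k]
      RingQuot (RWRel k p) ⊗[Polynomial k] RingQuot (RWRel k p) :=
  ∑ i ∈ Finset.range p,
    TensorProduct.map (mulRightLin k p (Bd k p ^ (p - 1 - i)))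
      (mulRightLin k p (Bd k p ^ i))

/-- The element `δ = d ⊗ 1 - 1 ⊗ d` of `B ⊗_{k[x]} B`. -/
noncomputable def deltaElem (k : Type) [Field k] (p : ℕ) :
    RingQuot (RWRel k p) ⊗[Polynomial k] RingQuot (RWRel k p) :=
  (Bd k p) ⊗ₜ[Polynomial k] (1 : RingQuot (RWRel k p))
    - (1 : RingQuot (RWRel k p)) ⊗ₜ[Polynomial k] (Bd k p)

/-- The element `σ = ∑_{i=0}^{p-1} d^(p-1-i) ⊗ d^i` of `B ⊗_{k[x]} B`. -/
noncomputable def sigmaElem (k : Type) [Field k] (p : ℕ) :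
    RingQuot (RWRel k p) ⊗[Polynomial k] RingQuot (RWRel k p) :=
  ∑ i ∈ Finset.range p, (Bd k p ^ (p - 1 - i)) ⊗ₜ[Polynomial k] (Bd k p ^ i)

noncomputable instance (k : Type) [Field k] (p : ℕ) :
    Zero (RingQuot (RWRel k p) ⊗[Polynomial k] RingQuot (RWRel k p)) :=
  ((inferInstance : AddCommMonoid
    (RingQuot (RWRel k p) ⊗[Polynomial k] RingQuot (RWRel k p)))).toAddMonoid.toZero

open Polynomial

namespace Polynomial

variable {R : Type*} [CommSemiring R]

theorem derivative_pow_eq_zero_of_charP (p : ℕ) [CharP R p] (hp : 0 < p) :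
    (derivative : Module.End R R[X]) ^ p = 0 := by
  refine LinearMap.ext fun q => ?_
  induction q using Polynomial.induction_on' with
  | add q r hq hr => rw [map_add, hq, hr, map_add]
  | monomial n a =>
    have hdvd : p ∣ n.descFactorial p :=
      (Nat.dvd_factorial hp le_rfl).trans (Nat.factorial_dvd_descFactorial n p)
    rw [Module.End.pow_apply, ← C_mul_X_pow_eq_monomial, iterate_derivative_C_mul,
      iterate_derivative_X_pow_eq_natCast_mul, (CharP.cast_eq_zero_iff R[X] p _).mpr hdvd]
    simp

end Polynomial

theorem Module.End.add_pow_apply_of_commute {R M : Type*} [Semiring R] [AddCommMonoid M]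
    [Module R M] {S D : Module.End R M} (h : Commute S D) {v : M} (hv : D v = 0) (m : ℕ) :
    ((S + D) ^ m) v = (S ^ m) v := by
  induction m with
  | zero => rfl
  | succ m ih =>
    have hDS : D ((S ^ m) v) = 0 := by
      rw [← Module.End.mul_apply, ← (h.pow_left m).eq, Module.End.mul_apply, hv, map_zero]
    rw [pow_succ', Module.End.mul_apply, ih, LinearMap.add_apply, hDS, add_zero, pow_succ',
      Module.End.mul_apply]

section PointwiseOperators

variable {R : Type*} [CommSemiring R]

noncomputable def truncShift (p : ℕ) : Module.End R (ℕ → R[X]) where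
  toFun w i := if 0 < i ∧ i < p then w (i - 1) else 0
  map_add' v w := by ext1 i; by_cases h : 0 < i ∧ i < p <;> simp [h]
  map_smul' a w := by ext1 i; by_cases h : 0 < i ∧ i < p <;> simp [h]

theorem truncShift_pow_apply (p : ℕ) {m : ℕ} (hm : 0 < m) (w : ℕ → R[X]) (i : ℕ) :
    (truncShift p ^ m) w i = if m ≤ i ∧ i < p then w (i - m) else 0 := by
  induction m, hm using Nat.le_induction generalizing i with
  | base => rfl
  | succ m hm ih =>
    rw [pow_succ', Module.End.mul_apply]
    change (if 0 < i ∧ i < p then (truncShift p ^ m) w (i - 1) else 0) = _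
    rw [ih]
    split_ifs <;> first | rfl | omega | (congr 1; omega)

theorem truncShift_pow_self {p : ℕ} (hp : 0 < p) :
    (truncShift p : Module.End R (ℕ → R[X])) ^ p = 0 := by
  ext1 w; ext1 i
  rw [truncShift_pow_apply p hp, if_neg (by omega)]
  rfl

theorem truncShift_pow_apply_single_zero {p j : ℕ} (hj : j < p) (m : ℕ) :
    (truncShift p ^ m) (Pi.single 0 1 : ℕ → R[X]) j = if m = j then 1 else 0 := by
  rcases Nat.eq_zero_or_pos m with rfl | hm
  · simp [Pi.single_apply, eq_comm]
  · rw [truncShift_pow_apply p hm]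
    split_ifs with h₁ h₂ h₂
    · rw [h₂, Nat.sub_self, Pi.single_eq_same]
    · rw [Pi.single_eq_of_ne (by omega)]
    · omega
    · rfl

theorem commute_truncShift_lsmul (p : ℕ) (g : R[X]) :
    Commute (truncShift p) (Algebra.lsmul R R (ℕ → R[X]) g) := by
  ext1 w; ext1 i
  change (if 0 < i ∧ i < p then g * w (i - 1) else 0) = g * (if 0 < i ∧ i < p then _ else 0)
  split_ifs <;> simp

noncomputable def pointwiseDerivative : Module.End R (ℕ → R[X]) :=
  LinearMap.compLeft derivative ℕ

theorem pointwiseDerivative_apply (w : ℕ → R[X]) (i : ℕ) :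
    pointwiseDerivative w i = derivative (w i) :=
  rfl

theorem pointwiseDerivative_pow_apply (n : ℕ) (w : ℕ → R[X]) (i : ℕ) :
    (pointwiseDerivative ^ n) w i = (derivative ^ n) (w i) := by
  induction n with
  | zero => rfl
  | succ n ih =>
    rw [pow_succ', Module.End.mul_apply, pow_succ', Module.End.mul_apply, ← ih]
    rfl

theorem pointwiseDerivative_pow_eq_zero_of_charP (p : ℕ) [CharP R p] (hp : 0 < p) :
    (pointwiseDerivative : Module.End R (ℕ → R[X])) ^ p = 0 := by
  ext1 w; ext1 i
  rw [pointwiseDerivative_pow_apply, derivative_pow_eq_zero_of_charP p hp]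
  rfl

theorem commute_truncShift_pointwiseDerivative (p : ℕ) :
    Commute (truncShift p : Module.End R (ℕ → R[X])) pointwiseDerivative := by
  ext1 w; ext1 i
  change (if 0 < i ∧ i < p then derivative (w (i - 1)) else 0) =
    derivative (if 0 < i ∧ i < p then _ else 0)
  split_ifs <;> simp

theorem pointwiseDerivative_mul_lsmul_X :
    pointwiseDerivative * Algebra.lsmul R R (ℕ → R[X]) (X : R[X]) =
      Algebra.lsmul R R (ℕ → R[X]) (X : R[X]) * pointwiseDerivative + 1 := by
  ext1 w; ext1 i
  simp only [Module.End.mul_apply, LinearMap.add_apply, Module.End.one_apply,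
    Algebra.lsmul_apply]
  rw [Pi.add_apply, Pi.smul_apply, pointwiseDerivative_apply, pointwiseDerivative_apply,
    Pi.smul_apply, smul_eq_mul, smul_eq_mul, derivative_mul, derivative_X, one_mul, add_comm]

end PointwiseOperators

section WeylRepresentation

noncomputable def weylD (R : Type*) [CommSemiring R] (p : ℕ) : Module.End R (ℕ → R[X]) :=
  truncShift p + pointwiseDerivative

variable {k : Type} [Field k] {p : ℕ}

theorem weylD_mul_lsmul_X :
    weylD k p * Algebra.lsmul k k (ℕ → k[X]) (X : k[X]) =
      Algebra.lsmul k k (ℕ → k[X]) (X : k[X]) * weylD k p + 1 := by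
  rw [weylD, add_mul, mul_add, pointwiseDerivative_mul_lsmul_X,
    (commute_truncShift_lsmul p (X : k[X])).eq, add_assoc]

variable [CharP k p]

theorem weylD_pow_self (hp : p.Prime) : weylD k p ^ p = 0 := by
  have := Fact.mk hp
  have : CharP (Module.End k (ℕ → k[X])) p := charP_of_injective_algebraMap' k p
  rw [weylD, add_pow_char_of_commute p (commute_truncShift_pointwiseDerivative p),
    truncShift_pow_self hp.pos, pointwiseDerivative_pow_eq_zero_of_charP p hp.pos, add_zero]

noncomputable def weylRep (hp : p.Prime) : RingQuot (RWRel k p) →ₐ[k] Module.End k (ℕ → k[X]) :=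
  RingQuot.liftAlgHom k
    ⟨FreeAlgebra.lift k fun b => if b then weylD k p else Algebra.lsmul k k _ (X : k[X]), by
      rintro _ _ (_ | _) <;> simp [weylD_mul_lsmul_X, weylD_pow_self hp]⟩

theorem weylRep_Bd (hp : p.Prime) : weylRep hp (Bd k p) = weylD k p := by
  simp [weylRep, Bd]

theorem weylRep_phi (hp : p.Prime) (g : k[X]) :
    weylRep hp (phi k p g) = Algebra.lsmul k k (ℕ → k[X]) g := by
  have hx : weylRep hp (Bx k p) = Algebra.lsmul k k (ℕ → k[X]) (X : k[X]) := by
    simp [weylRep, Bx]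
  change weylRep hp (aeval (Bx k p) g) = _
  rw [← aeval_algHom_apply, hx, aeval_algHom_apply, aeval_X_left_apply]

end WeylRepresentation

theorem rdelta_Bd_pow_tmul {k : Type} [Field k] {p : ℕ} (i j : ℕ) :
    rdelta k p ((Bd k p ^ i) ⊗ₜ[k[X]] (Bd k p ^ j)) =
      (Bd k p ^ (i + 1)) ⊗ₜ[k[X]] (Bd k p ^ j) - (Bd k p ^ i) ⊗ₜ[k[X]] (Bd k p ^ (j + 1)) := by
  rw [rdelta, LinearMap.sub_apply, TensorProduct.map_tmul, TensorProduct.map_tmul, pow_succ,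
    pow_succ]
  rfl

section Coefficients

variable {k : Type} [Field k] {p : ℕ} [CharP k p]

/-- `Pi.single 0 1` is the coordinate vector of `1 = d⁰`. -/
noncomputable def coeffB (hp : p.Prime) (j : ℕ) : RingQuot (RWRel k p) →ₗ[k[X]] k[X] where
  toFun b := weylRep hp b (Pi.single 0 1) j
  map_add' a b := by rw [map_add]; rfl
  map_smul' g b := by
    change weylRep hp (phi k p g * b) (Pi.single 0 1) j = g * weylRep hp b (Pi.single 0 1) j
    rw [map_mul, weylRep_phi, Module.End.mul_apply, Algebra.lsmul_apply, Pi.smul_apply,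
      smul_eq_mul]

theorem coeffB_Bd_pow (hp : p.Prime) {j : ℕ} (hj : j < p) (m : ℕ) :
    coeffB hp j (Bd k p ^ m) = if m = j then 1 else 0 := by
  change weylRep hp (Bd k p ^ m) (Pi.single 0 1) j = _
  rw [map_pow, weylRep_Bd, weylD, Module.End.add_pow_apply_of_commute
    (commute_truncShift_pointwiseDerivative p), truncShift_pow_apply_single_zero hj]
  ext1 i
  rw [pointwiseDerivative_apply, Pi.single_apply]
  split_ifs <;> simp

noncomputable def coeffTensor (hp : p.Prime) (a b : ℕ) :
    RingQuot (RWRel k p) ⊗[k[X]] RingQuot (RWRel k p) →ₗ[k[X]] k[X] :=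
  LinearMap.mul' k[X] k[X] ∘ₗ TensorProduct.map (coeffB hp a) (coeffB hp b)

theorem coeffTensor_Bd_pow_tmul (hp : p.Prime) {a b : ℕ} (ha : a < p) (hb : b < p) (i j : ℕ) :
    coeffTensor hp a b ((Bd k p ^ i) ⊗ₜ[k[X]] (Bd k p ^ j)) =
      if i = a ∧ j = b then 1 else 0 := by
  rw [coeffTensor, LinearMap.comp_apply, TensorProduct.map_tmul, LinearMap.mul'_apply,
    coeffB_Bd_pow hp ha, coeffB_Bd_pow hp hb, ite_zero_mul_ite_zero, one_mul]

theorem coeffTensor_sum_Bd_pow_add_tmul (hp : p.Prime) (F : ℕ → ℕ → k[X]) (s t : ℕ) {a b : ℕ}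
    (ha : a < p) (hb : b < p) :
    coeffTensor hp a b (∑ i ∈ Finset.range p, ∑ j ∈ Finset.range p,
        F i j • ((Bd k p ^ (i + s)) ⊗ₜ[k[X]] (Bd k p ^ (j + t)))) =
      if s ≤ a ∧ t ≤ b then F (a - s) (b - t) else 0 := by
  simp only [map_sum, map_smul, coeffTensor_Bd_pow_tmul hp ha hb, smul_eq_mul, mul_ite, mul_one,
    mul_zero]
  split_ifs with h
  · have hiff : ∀ x y, (x + s = a ∧ y + t = b) ↔ (x = a - s ∧ y = b - t) := by omega
    simp only [hiff, ite_and, Finset.sum_ite_eq', Finset.sum_ite_irrel, Finset.sum_const_zero,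
      Finset.mem_range]
    rw [if_pos (by omega), if_pos (by omega)]
  · exact Finset.sum_eq_zero fun x _ => Finset.sum_eq_zero fun y _ => if_neg (by omega)

theorem coeffTensor_rdelta_sum (hp : p.Prime) (F : ℕ → ℕ → k[X]) {i j : ℕ} (hi : i + 1 < p)
    (hj : j < p) :
    coeffTensor hp (i + 1) j (rdelta k p (∑ a ∈ Finset.range p, ∑ b ∈ Finset.range p,
        F a b • ((Bd k p ^ a) ⊗ₜ[k[X]] (Bd k p ^ b)))) =
      F i j - if j = 0 then 0 else F (i + 1) (j - 1) := by
  simp only [map_sum, map_smul, rdelta_Bd_pow_tmul, smul_sub, Finset.sum_sub_distrib]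
  have h₁ := coeffTensor_sum_Bd_pow_add_tmul hp F 1 0 hi hj
  have h₂ := coeffTensor_sum_Bd_pow_add_tmul hp F 0 1 hi hj
  simp only [add_zero] at h₁ h₂
  rw [map_sub, h₁, h₂]
  simp [Nat.one_le_iff_ne_zero]

end Coefficients

theorem eq_zero_of_eq_ite_shift {M : Type*} [Zero M] {p : ℕ} (F : ℕ → ℕ → M)
    (hF : ∀ i j, i + 1 < p → j < p → F i j = if j = 0 then 0 else F (i + 1) (j - 1)) :
    ∀ {i j}, i + j < p - 1 → F i j = 0 := by
  intro i j hij
  induction j generalizing i with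
  | zero => simpa using hF i 0 (by omega) (by omega)
  | succ j ih => simpa using (hF i (j + 1) (by omega) (by omega)).trans (ih (by omega))

/-- If `∑ f_ij • (d^i ⊗ d^j)` is annihilated by right multiplication by
`δ = d ⊗ 1 - 1 ⊗ d`, then `f_ij = 0` whenever `i + j < p - 1`. -/
theorem statement16 (k : Type) [Field k] (p : ℕ) (hp : p.Prime) [CharP k p]
    (f : Fin p → Fin p → Polynomial k)
    (hker : rdelta k p (∑ i : Fin p, ∑ j : Fin p,
        f i j • ((Bd k p ^ (i : ℕ)) ⊗ₜ[Polynomial k] (Bd k p ^ (j : ℕ)))) = 0) :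
    ∀ i j : Fin p, (i : ℕ) + (j : ℕ) < p - 1 → f i j = 0 := by
  let F : ℕ → ℕ → k[X] := fun i j => if h : i < p ∧ j < p then f ⟨i, h.1⟩ ⟨j, h.2⟩ else 0
  have hsum : ∑ i : Fin p, ∑ j : Fin p,
      f i j • ((Bd k p ^ (i : ℕ)) ⊗ₜ[k[X]] (Bd k p ^ (j : ℕ))) =
        ∑ i ∈ Finset.range p, ∑ j ∈ Finset.range p,
          F i j • ((Bd k p ^ i) ⊗ₜ[k[X]] (Bd k p ^ j)) := by
    simp only [Finset.sum_range, F, Fin.is_lt, and_self, dif_pos, Fin.eta]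
  have hF : ∀ i j, i + 1 < p → j < p → F i j = if j = 0 then 0 else F (i + 1) (j - 1) :=
    fun i j hi hj => sub_eq_zero.mp <| by
      rw [← coeffTensor_rdelta_sum hp F hi hj, ← hsum, hker, map_zero]
  intro i j hij
  simpa [F] using eq_zero_of_eq_ite_shift F hF hij
end

section
/- Let $k$ be a field of characteristic $p > 0$ and $B = k\langle x, d\rangle/(dx - xd - 1, d^p)$. The kernel of the multiplication map $m : B \otimes_{k[x]} B \to B$, $a \otimes b \mapsto ab$, equals the left ideal of $B \otimes_{k[x]} B$ generated by $d \otimes 1 - 1 \otimes d$. -/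
set_option maxHeartbeats 1000000
set_option maxSynthPendingDepth 3
set_option synthInstance.maxHeartbeats 400000

open scoped TensorProduct

/-- A copy of `B` regarded as a `k[x]`-module via right multiplication through `phi`
(this is the module structure on the first tensor factor). -/
def Br (k : Type) [Field k] (p : ℕ) : Type := RingQuot (RWRel k p)

noncomputable instance (k : Type) [Field k] (p : ℕ) : AddCommGroup (Br k p) :=
  inferInstanceAs (AddCommGroup (RingQuot (RWRel k p)))

noncomputable instance (k : Type) [Field k] (p : ℕ) : Module (Polynomial k) (Br k p) :=
  Module.compHom (RingQuot (RWRel k p))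
    ((phi k p).toOpposite fun x y => by
      simp only [Commute, SemiconjBy, ← map_mul, mul_comm])

/-- The identity of `B`, viewed as landing in the right-module copy `Br`. -/
def toBr (k : Type) [Field k] (p : ℕ) (a : RingQuot (RWRel k p)) : Br k p := a

/-- The multiplication map `m : B ⊗_{k[x]} B → B`, `a ⊗ b ↦ a * b`. -/
noncomputable def mmul (k : Type) [Field k] (p : ℕ) :
    Br k p ⊗[Polynomial k] RingQuot (RWRel k p) →+ RingQuot (RWRel k p) :=
  TensorProduct.liftAddHom
    { toFun := fun a => AddMonoidHom.mulLeft (show RingQuot (RWRel k p) from a)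
      map_zero' := by
        ext b
        show (0 : RingQuot (RWRel k p)) * b = 0
        rw [zero_mul]
      map_add' := fun a a' => by
        ext b
        exact add_mul (show RingQuot (RWRel k p) from a)
          (show RingQuot (RWRel k p) from a') b }
    (fun f a b => by
      show ((show RingQuot (RWRel k p) from a) * phi k p f) * b
          = (show RingQuot (RWRel k p) from a) * (phi k p f * b)
      rw [mul_assoc])

/-!
Every element `b` of `B` can be moved across the tensor sign modulo the left ideal `J` generated
by `d ⊗ 1 - 1 ⊗ d`: `a ⊗ b c ≡ a b ⊗ c`. The elements with this property form a subalgebra,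
which contains `x` (the tensor product is over `k[x]`) and `d` (by definition of `J`), hence is
all of `B`. Consequently `w ≡ m(w) ⊗ 1` modulo `J`, so `J` contains the kernel of `m`; conversely
`m` kills `a d ⊗ b - a ⊗ d b` by associativity.
-/

open Polynomial

namespace ReducedWeyl

variable (k : Type) [Field k] (p : ℕ)

local notation "𝔹" => RingQuot (RWRel k p)

local notation "𝔹ᵉ" => Br k p ⊗[k[X]] RingQuot (RWRel k p)

/-- The left ideal of `B ⊗_{k[x]} B` generated by `δ = d ⊗ 1 - 1 ⊗ d`, spanned additively by
the elements `a·δ·b = a d ⊗ b - a ⊗ d b`. -/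
noncomputable def dIdeal : AddSubgroup 𝔹ᵉ :=
  AddSubgroup.closure {z : 𝔹ᵉ | ∃ a b : 𝔹,
    z = (toBr k p (a * Bd k p)) ⊗ₜ[k[X]] b - (toBr k p a) ⊗ₜ[k[X]] (Bd k p * b)}

variable {k p}

theorem toBr_mul_d_tmul_sub_mem_dIdeal (a b : 𝔹) :
    toBr k p (a * Bd k p) ⊗ₜ[k[X]] b - toBr k p a ⊗ₜ[k[X]] (Bd k p * b) ∈ dIdeal k p :=
  AddSubgroup.subset_closure ⟨a, b, rfl⟩

theorem tmul_phi_mul (a c : 𝔹) (r : k[X]) :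
    toBr k p a ⊗ₜ[k[X]] (phi k p r * c) = toBr k p (a * phi k p r) ⊗ₜ[k[X]] c :=
  (TensorProduct.smul_tmul r (toBr k p a) c).symm

theorem mmul_tmul (a b : 𝔹) : mmul k p (toBr k p a ⊗ₜ[k[X]] b) = a * b :=
  TensorProduct.liftAddHom_tmul _ _ _ _

theorem toBr_add (a b : 𝔹) : toBr k p (a + b) = toBr k p a + toBr k p b := rfl

theorem toBr_zero : toBr k p 0 = 0 := rfl

theorem phi_C (r : k) : phi k p (C r) = algebraMap k 𝔹 r := aeval_C _ r

theorem phi_X : phi k p X = Bx k p := aeval_X _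

variable (k p)

noncomputable def movable : Subalgebra k 𝔹 where
  carrier := {y | ∀ a c : 𝔹,
    toBr k p a ⊗ₜ[k[X]] (y * c) - toBr k p (a * y) ⊗ₜ[k[X]] c ∈ dIdeal k p}
  mul_mem' {y₁ y₂} h₁ h₂ a c := by
    convert (dIdeal k p).add_mem (h₁ a (y₂ * c)) (h₂ (a * y₁) c) using 1
    rw [mul_assoc, mul_assoc a]
    abel
  add_mem' {y₁ y₂} h₁ h₂ a c := by
    convert (dIdeal k p).add_mem (h₁ a c) (h₂ a c) using 1
    rw [add_mul, mul_add, TensorProduct.tmul_add, toBr_add, TensorProduct.add_tmul]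
    abel
  algebraMap_mem' r a c := by
    rw [← phi_C, tmul_phi_mul, sub_self]
    exact (dIdeal k p).zero_mem

variable {k p}

theorem Bx_mem_movable : Bx k p ∈ movable k p := fun a c => by
  rw [← phi_X, tmul_phi_mul, sub_self]
  exact (dIdeal k p).zero_mem

theorem Bd_mem_movable : Bd k p ∈ movable k p := fun a c => by
  simpa only [neg_sub] using (dIdeal k p).neg_mem (toBr_mul_d_tmul_sub_mem_dIdeal a c)

variable (k p) in
theorem adjoin_Bx_Bd : Algebra.adjoin k {Bx k p, Bd k p} = ⊤ := by
  have hrange :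
      Set.range (RingQuot.mkAlgHom k (RWRel k p) ∘ FreeAlgebra.ι k) = {Bx k p, Bd k p} := by
    ext y
    simp only [Set.mem_range, Function.comp_apply, Bool.exists_bool, Bx, Bd, Set.mem_insert_iff,
      Set.mem_singleton_iff, eq_comm]
  rw [← hrange, Set.range_comp, ← AlgHom.map_adjoin, FreeAlgebra.adjoin_range_ι, Algebra.map_top,
    AlgHom.range_eq_top]
  exact RingQuot.mkAlgHom_surjective k (RWRel k p)

variable (k p) in
theorem movable_eq_top : movable k p = ⊤ :=
  eq_top_iff.2 <| (adjoin_Bx_Bd k p).symm.le.trans <|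
    Algebra.adjoin_le <| Set.pair_subset Bx_mem_movable Bd_mem_movable

theorem sub_mmul_tmul_one_mem_dIdeal (w : 𝔹ᵉ) :
    w - toBr k p (mmul k p w) ⊗ₜ[k[X]] (1 : 𝔹) ∈ dIdeal k p := by
  induction w using TensorProduct.induction_on with
  | zero => simpa only [map_zero, toBr_zero, TensorProduct.zero_tmul, sub_zero] using
      (dIdeal k p).zero_mem
  | tmul a b =>
    have hb : b ∈ movable k p := movable_eq_top k p ▸ Algebra.mem_top
    change toBr k p a ⊗ₜ[k[X]] b - toBr k p (mmul k p (toBr k p a ⊗ₜ[k[X]] b)) ⊗ₜ[k[X]] 1 ∈ _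
    rw [mmul_tmul a b]
    simpa only [mul_one] using hb a 1
  | add w₁ w₂ h₁ h₂ =>
    convert (dIdeal k p).add_mem h₁ h₂ using 1
    rw [map_add, toBr_add, TensorProduct.add_tmul]
    abel

theorem dIdeal_eq_ker_mmul : dIdeal k p = (mmul k p).ker := by
  refine le_antisymm ((AddSubgroup.closure_le _).2 ?_) fun w hw => ?_
  · rintro z ⟨a, b, rfl⟩
    rw [SetLike.mem_coe, AddMonoidHom.mem_ker, map_sub, mmul_tmul, mmul_tmul, mul_assoc, sub_self]
  · simpa only [(AddMonoidHom.mem_ker).1 hw, toBr_zero, TensorProduct.zero_tmul, sub_zero] using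
      sub_mmul_tmul_one_mem_dIdeal w

end ReducedWeyl

theorem statement18_general (k : Type) [Field k] (p : ℕ) :
    {w : Br k p ⊗[Polynomial k] RingQuot (RWRel k p) | mmul k p w = 0}
      = (AddSubgroup.closure {z : Br k p ⊗[Polynomial k] RingQuot (RWRel k p) |
          ∃ a b : RingQuot (RWRel k p),
            z = (toBr k p (a * Bd k p)) ⊗ₜ[Polynomial k] b
                - (toBr k p a) ⊗ₜ[Polynomial k] (Bd k p * b)} :
          AddSubgroup (Br k p ⊗[Polynomial k] RingQuot (RWRel k p))) :=
  congrArg SetLike.coe (ReducedWeyl.dIdeal_eq_ker_mmul (k := k) (p := p)).symm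

/-- The kernel of the multiplication map `B ⊗_{k[x]} B → B` equals the left ideal of
`B^e` generated by `δ = d ⊗ 1 - 1 ⊗ d`, i.e. the additive subgroup generated by the
elements `a·δ·b = (a*d) ⊗ b - a ⊗ (d*b)`. -/
theorem statement18 (k : Type) [Field k] (p : ℕ) (hp : p.Prime) [CharP k p] :
    {w : Br k p ⊗[Polynomial k] RingQuot (RWRel k p) | mmul k p w = 0}
      = (AddSubgroup.closure {z : Br k p ⊗[Polynomial k] RingQuot (RWRel k p) |
          ∃ a b : RingQuot (RWRel k p),
            z = (toBr k p (a * Bd k p)) ⊗ₜ[Polynomial k] b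
                - (toBr k p a) ⊗ₜ[Polynomial k] (Bd k p * b)} :
          AddSubgroup (Br k p ⊗[Polynomial k] RingQuot (RWRel k p))) :=
  statement18_general k p
end
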